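/- Let R be a ring and n a positive integer. An ideal J of the full matrix ring M_n(R) is a z°-ideal if and only if J = M_n(I) for some z°_{n²}-ideal I of R. -/

import Mathlib

open TwoSidedIdeal

/-- Left annihilator of a set: `l(S) = {x | ∀ s ∈ S, x*s = 0}`. -/
def lAnn (R : Type*) [Ring R] (S : Set R) : Set R := {x | ∀ s ∈ S, x * s = 0}

/-- Right annihilator of a set: `r(S) = {x | ∀ s ∈ S, s*x = 0}`. -/
def rAnn (R : Type*) [Ring R] (S : Set R) : Set R := {x | ∀ s ∈ S, s * x = 0}

/-- A ring is semiprime if `I² = 0` implies `I = 0` for every two-sided ideal `I`. -/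
def IsSemiprimeRing (R : Type*) [Ring R] : Prop :=
  ∀ I : TwoSidedIdeal R, (∀ a ∈ I, ∀ b ∈ I, a * b = 0) → I = ⊥

/-- A two-sided ideal `P` is prime if it is proper and `IJ ⊆ P` implies `I ⊆ P` or `J ⊆ P`. -/
def IsPrimeTSI {R : Type*} [Ring R] (P : TwoSidedIdeal R) : Prop :=
  P ≠ ⊤ ∧ ∀ I J : TwoSidedIdeal R, (∀ a ∈ I, ∀ b ∈ J, a * b ∈ P) → I ≤ P ∨ J ≤ P

/-- A minimal prime ideal: a prime two-sided ideal minimal among primes. -/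
def IsMinPrime {R : Type*} [Ring R] (P : TwoSidedIdeal R) : Prop :=
  IsPrimeTSI P ∧ ∀ Q : TwoSidedIdeal R, IsPrimeTSI Q → Q ≤ P → Q = P

/-- `Pmin R B` is the intersection of all minimal prime ideals of `R` containing the set `B`
(equal to all of `R` if there are none). -/
def Pmin (R : Type*) [Ring R] (B : Set R) : Set R :=
  ⋂ P ∈ {P : TwoSidedIdeal R | IsMinPrime P ∧ B ⊆ (P : Set R)}, (P : Set R)

/-- `Pa a` : the intersection of all minimal prime ideals containing `a`. -/
def Pa {R : Type*} [Ring R] (a : R) : Set R := Pmin R {a}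

/-- An ideal `I` is a z°-ideal if `P_a ⊆ I` for every `a ∈ I`. -/
def IsZoIdeal {R : Type*} [Ring R] (I : TwoSidedIdeal R) : Prop :=
  ∀ a ∈ I, Pa a ⊆ (I : Set R)

/-- An ideal `I` is a right d-ideal if `r(l(RaR)) ⊆ I` for every `a ∈ I`. -/
def IsRightDIdeal {R : Type*} [Ring R] (I : TwoSidedIdeal R) : Prop :=
  ∀ a ∈ I, rAnn R (lAnn R (span {a} : Set R)) ⊆ (I : Set R)

/-- An ideal `I` is a right annihilator ideal if `I = r(l(I))`. -/
def IsRightAnnIdeal {R : Type*} [Ring R] (I : TwoSidedIdeal R) : Prop :=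
  (I : Set R) = rAnn R (lAnn R (I : Set R))

/-- An ideal `I` is a `z°ₖ`-ideal if `P_F ⊆ I` for every finite subset `F ⊆ I` with at
most `k` elements. -/
def IsZnIdeal {R : Type*} [Ring R] (k : ℕ) (I : TwoSidedIdeal R) : Prop :=
  ∀ F : Finset R, (F : Set R) ⊆ (I : Set R) → F.card ≤ k → Pmin R (F : Set R) ⊆ (I : Set R)

/-! Two-sided ideals of `Mₙ(R)` are exactly the `Mₙ(I)`, and `I ↦ Mₙ(I)` is an order isomorphism
that preserves primality; so the minimal primes of `Mₙ(R)` are the `Mₙ(P)` with `P` a minimal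
prime of `R`, and `P_M = Mₙ(P_F)` where `F` is the set of entries of `M`, of size at most `n²`.
Conversely, every set of at most `n²` elements, padded with zeros, is the set of entries of a
matrix. -/

theorem Finset.exists_subset_range_subset_insert {α ι : Type*} [Fintype ι] (F : Finset α) (d : α)
    (hF : F.card ≤ Fintype.card ι) :
    ∃ g : ι → α, ↑F ⊆ Set.range g ∧ Set.range g ⊆ insert d ↑F := by
  obtain ⟨f⟩ := Function.Embedding.nonempty_of_card_le (α := F) (β := ι) (by simpa using hF)
  refine ⟨Function.extend f Subtype.val fun _ => d, ?_, ?_⟩ <;> rw [Set.range_extend f.injective]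
  · exact fun x hx => Or.inl ⟨⟨x, hx⟩, rfl⟩
  · rintro _ (⟨x, rfl⟩ | ⟨_, _, rfl⟩)
    exacts [Or.inr x.2, Or.inl rfl]

theorem Set.matrix_subset_matrix_iff {α m n : Type*} [Nonempty m] [Nonempty n] {S T : Set α} :
    (S.matrix : Set (Matrix m n α)) ⊆ T.matrix ↔ S ⊆ T := by
  refine ⟨fun h x hx => ?_, fun h M hM i j => h (hM i j)⟩
  obtain ⟨i⟩ := ‹Nonempty m›
  obtain ⟨j⟩ := ‹Nonempty n›
  exact h (a := Matrix.of fun _ _ => x) (fun _ _ => hx) i j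

section MinimalPrimes

variable {R : Type*} [Ring R]

theorem mem_Pmin_iff {B : Set R} {x : R} :
    x ∈ Pmin R B ↔ ∀ P : TwoSidedIdeal R, IsMinPrime P → B ⊆ P → x ∈ P := by
  simp only [Pmin, Set.mem_iInter, Set.mem_ofPred_eq, SetLike.mem_coe, and_imp]

theorem Pmin_mono {B B' : Set R} (h : B ⊆ B') : Pmin R B ⊆ Pmin R B' := by
  simp only [Set.subset_def, mem_Pmin_iff]
  exact fun x hx P hP hB' => hx P hP (h.trans hB')

end MinimalPrimes

section Matrix

open Matrix

variable {R : Type*} [Ring R] {m : Type*} [Fintype m]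

theorem TwoSidedIdeal.coe_matrix (I : TwoSidedIdeal R) :
    (I.matrix m : Set (Matrix m m R)) = (I : Set R).matrix :=
  rfl

theorem TwoSidedIdeal.single_mem_matrix [DecidableEq m] {I : TwoSidedIdeal R} {a : R} (ha : a ∈ I)
    (i j : m) : single i j a ∈ I.matrix m := by
  intro k l
  rw [single_apply]
  split_ifs
  exacts [ha, I.zero_mem]

variable [DecidableEq m] [Nonempty m]

theorem TwoSidedIdeal.matrix_le_matrix_iff {I J : TwoSidedIdeal R} :
    I.matrix m ≤ J.matrix m ↔ I ≤ J :=
  orderIsoMatrix.le_iff_le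

theorem TwoSidedIdeal.matrix_injective : Function.Injective (matrix (R := R) m) :=
  equivMatrix.injective

theorem TwoSidedIdeal.matrix_surjective : Function.Surjective (matrix (R := R) m) :=
  equivMatrix.surjective

theorem forall_mul_mem_matrix_iff {I J P : TwoSidedIdeal R} :
    (∀ A ∈ I.matrix m, ∀ B ∈ J.matrix m, A * B ∈ P.matrix m) ↔ ∀ a ∈ I, ∀ b ∈ J, a * b ∈ P := by
  refine ⟨fun h a ha b hb => ?_, fun h A hA B hB i j => ?_⟩
  · obtain ⟨i⟩ := ‹Nonempty m›
    have hab := h _ (single_mem_matrix ha i i) _ (single_mem_matrix hb i i) i i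
    rwa [single_mul_single_same, single_apply_same] at hab
  · rw [mul_apply]
    exact sum_mem fun k _ => h _ (hA i k) _ (hB k j)

theorem isPrimeTSI_matrix_iff {P : TwoSidedIdeal R} : IsPrimeTSI (P.matrix m) ↔ IsPrimeTSI P := by
  unfold IsPrimeTSI
  rw [← matrix_top, Ne, matrix_injective.eq_iff, matrix_surjective.forall₂]
  simp only [forall_mul_mem_matrix_iff, matrix_le_matrix_iff]

theorem isMinPrime_matrix_iff {P : TwoSidedIdeal R} : IsMinPrime (P.matrix m) ↔ IsMinPrime P := by
  simp only [IsMinPrime, matrix_surjective.forall, isPrimeTSI_matrix_iff, matrix_le_matrix_iff,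
    matrix_injective.eq_iff]

theorem Pmin_singleton_matrix (M : Matrix m m R) :
    Pmin (Matrix m m R) {M} = (Pmin R (Set.range (Function.uncurry M))).matrix := by
  ext N
  simp only [mem_Pmin_iff, Set.mem_matrix, matrix_surjective.forall, isMinPrime_matrix_iff,
    Set.singleton_subset_iff, SetLike.mem_coe, mem_matrix, Set.range_subset_iff, Prod.forall]
  exact ⟨fun h i j P hP hM => h P hP hM i j, fun h P hP hM i j => h i j P hP hM⟩

theorem isZoIdeal_matrix_iff {I : TwoSidedIdeal R} :
    IsZoIdeal (I.matrix m) ↔ IsZnIdeal (Fintype.card m ^ 2) I := by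
  classical
  simp only [IsZoIdeal, Pa, Pmin_singleton_matrix, coe_matrix, Set.matrix_subset_matrix_iff]
  refine ⟨fun h F hFI hF => ?_, fun h M hM => ?_⟩
  · obtain ⟨g, hFg, hg⟩ := F.exists_subset_range_subset_insert (ι := m × m) 0
      (by rwa [Fintype.card_prod, ← sq])
    rw [← Function.uncurry_curry g] at hFg hg
    exact (Pmin_mono hFg).trans <| h (Function.curry g) fun i j =>
      Set.insert_subset I.zero_mem hFI (hg ⟨(i, j), rfl⟩)
  · have hcoe : ((Finset.univ.image (Function.uncurry M) : Finset R) : Set R) =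
        Set.range (Function.uncurry M) := by
      rw [Finset.coe_image, Finset.coe_univ, Set.image_univ]
    refine hcoe ▸ h _ (hcoe ▸ ?_) ?_
    · rintro _ ⟨⟨i, j⟩, rfl⟩
      exact hM i j
    · exact Finset.card_image_le.trans (by rw [Finset.card_univ, Fintype.card_prod, sq])

end Matrix

/-- Theorem 4.2: an ideal `J` of `Mₙ(R)` is a z°-ideal iff `J = Mₙ(I)` for some
`z°_{n²}`-ideal `I` of `R`. -/
theorem stmt7 (R : Type*) [Ring R] (n : ℕ) (hn : 0 < n)
    (J : TwoSidedIdeal (Matrix (Fin n) (Fin n) R)) :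
    IsZoIdeal J ↔ ∃ I : TwoSidedIdeal R, IsZnIdeal (n ^ 2) I ∧
      (J : Set (Matrix (Fin n) (Fin n) R)) =
        {M : Matrix (Fin n) (Fin n) R | ∀ i j, M i j ∈ I} := by
  have : Nonempty (Fin n) := ⟨⟨0, hn⟩⟩
  obtain ⟨I, rfl⟩ := matrix_surjective (R := R) (m := Fin n) J
  have hcoe (I' : TwoSidedIdeal R) :
      ((I.matrix (Fin n) : Set _) = {M : Matrix (Fin n) (Fin n) R | ∀ i j, M i j ∈ I'}) ↔ I' = I :=
    SetLike.coe_set_eq.trans matrix_injective.eq_iff |>.trans eq_comm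
  simp only [hcoe, exists_eq_right, isZoIdeal_matrix_iff, Fintype.card_fin]
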